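/- For all integers N ≥ 2 and all reals P > 0, the gap between the MISO sum capacity and the corrected PIR rate satisfies (1/2)·log₂(1 + N²P) − (1/2)·log₂(1/2 + ⌊N/2⌋²P) ≤ 2. -/
import Mathlib

/-- For all integers `N ≥ 2` and all reals `P > 0`,
`(1/2)·log₂(1 + N²P) − (1/2)·log₂(1/2 + ⌊N/2⌋²P) ≤ 2`. -/
theorem stmt5 (N : ℕ) (hN : 2 ≤ N) (P : ℝ) (hP : 0 < P) :
    (1/2) * Real.logb 2 (1 + (N : ℝ)^2 * P)
      - (1/2) * Real.logb 2 (1/2 + ((N / 2 : ℕ) : ℝ)^2 * P) ≤ 2 := by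
  set m := N / 2 with hm
  have hmn : (N : ℝ) ≤ 2 * (m : ℝ) + 1 := by
    have := Nat.div_add_mod N 2
    have h2 : N ≤ 2 * m + 1 := by omega
    exact_mod_cast h2
  have hNr : (2 : ℝ) ≤ (N : ℝ) := by exact_mod_cast hN
  have hB : (0 : ℝ) < 1/2 + (m : ℝ)^2 * P := by positivity
  have hkey : 1 + (N : ℝ)^2 * P ≤ 16 * (1/2 + (m : ℝ)^2 * P) := by
    have hsq : (N : ℝ)^2 ≤ 16 * (m : ℝ)^2 := by
      nlinarith [sq_nonneg ((N:ℝ) - 2), sq_nonneg (2*(m:ℝ) + 1 - (N:ℝ))]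
    nlinarith
  have hlog : Real.logb 2 (1 + (N : ℝ)^2 * P)
      ≤ 4 + Real.logb 2 (1/2 + (m : ℝ)^2 * P) := by
    have h1 : Real.logb 2 (1 + (N : ℝ)^2 * P)
        ≤ Real.logb 2 (16 * (1/2 + (m : ℝ)^2 * P)) :=
      Real.logb_le_logb_of_le (by norm_num) (by positivity) hkey
    rw [Real.logb_mul (by norm_num) (ne_of_gt hB)] at h1
    have h16 : Real.logb 2 (16 : ℝ) = 4 := by
      rw [show (16:ℝ) = 2^(4:ℕ) by norm_num, Real.logb_pow, Real.logb_self_eq_one] <;> norm_num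
    linarith
  linarith
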